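/- arXiv:1004.4171 — 6 statements merged into one kernel-verified Lean document; each statement's English description precedes it below -/
import Mathlib

section
/- Let P be a Laurent polynomial with integer coefficients in a variable v. If there exists N such that for every prime p > N the value P(√p) is an integer, then P is a Laurent polynomial in v² (i.e., all coefficients of odd powers of v vanish). -/
/-- Evaluation of an integer Laurent polynomial (given by its finitely supported
coefficient function) at a real number. -/
noncomputable def lEval (P : ℤ →₀ ℤ) (x : ℝ) : ℝ :=
  ∑ k ∈ P.support, (P k : ℝ) * x ^ k

/-- If `P ∈ ℤ[v,v⁻¹]` takes integer values at `√p` for all sufficiently large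
primes `p`, then all odd-degree coefficients of `P` vanish. -/
theorem laurent_integer_values_at_sqrt_primes_even
    (P : ℤ →₀ ℤ)
    (h : ∃ N : ℕ, ∀ p : ℕ, Nat.Prime p → N < p →
      ∃ z : ℤ, lEval P (Real.sqrt p) = (z : ℝ)) :
    ∀ k : ℤ, Odd k → P k = 0 := by
  classical
  obtain ⟨N, hN⟩ := h
  set M : ℤ := (P.support.sup fun k => k.natAbs : ℕ) + 1 with hMdef
  have hMk : ∀ k ∈ P.support, -M ≤ k ∧ 1 ≤ M := by
    intro k hk
    have h1 : k.natAbs ≤ P.support.sup fun k => k.natAbs := Finset.le_sup hk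
    constructor <;> omega
  set S : Finset ℤ := P.support.filter (fun k => Odd k) with hS
  have hSnonneg : ∀ k ∈ S, 0 ≤ (k - 1) / 2 + M := by
    intro k hk
    rw [hS, Finset.mem_filter] at hk
    obtain ⟨hk1, hk2⟩ := hk
    obtain ⟨hk3, hk4⟩ := hMk k hk1
    obtain ⟨q, hq⟩ := hk2
    have hq2 : (k - 1) / 2 = q := by omega
    omega
  set e : ℤ → ℕ := fun k => ((k - 1) / 2 + M).toNat with he
  set Q : Polynomial ℚ := ∑ k ∈ S, Polynomial.C ((P k : ℚ)) * Polynomial.X ^ (e k)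
    with hQ
  -- For each big prime, Q vanishes at p
  have hroot : ∀ p : ℕ, Nat.Prime p → N < p → Q.IsRoot (p : ℚ) := by
    intro p hp hNp
    obtain ⟨z, hz⟩ := hN p hp hNp
    have hppos : (0 : ℝ) < (p : ℝ) := by exact_mod_cast hp.pos
    have hs0 : Real.sqrt p ≠ 0 := by positivity
    have hsq : Real.sqrt p ^ (2 : ℤ) = (p : ℝ) := by
      rw [show ((2:ℤ)) = ((2:ℕ):ℤ) by rfl, zpow_natCast]
      exact Real.sq_sqrt hppos.le
    have hq0 : ((p : ℚ)) ≠ 0 := by exact_mod_cast hp.pos.ne'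
    set A : ℚ := ∑ k ∈ P.support.filter (fun k => ¬ Odd k), (P k : ℚ) * (p : ℚ) ^ (k / 2)
      with hAdef
    set B : ℚ := ∑ k ∈ S, (P k : ℚ) * (p : ℚ) ^ ((k - 1) / 2) with hBdef
    have hsplit : lEval P (Real.sqrt p) = (B : ℝ) * Real.sqrt p + (A : ℝ) := by
      rw [lEval, ← Finset.sum_filter_add_sum_filter_not P.support (fun k => Odd k)]
      congr 1
      · rw [← hS, hBdef]
        push_cast
        rw [Finset.sum_mul]
        apply Finset.sum_congr rfl
        intro k hk
        rw [hS, Finset.mem_filter] at hk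
        obtain ⟨q, hq⟩ := hk.2
        have hq2 : (k - 1) / 2 = q := by omega
        rw [hq2, hq, zpow_add₀ hs0, zpow_mul, hsq, zpow_one]
        ring
      · rw [hAdef]
        push_cast
        apply Finset.sum_congr rfl
        intro k hk
        rw [Finset.mem_filter] at hk
        have hk2 : Even k := Int.not_odd_iff_even.mp hk.2
        obtain ⟨q, hq⟩ := hk2
        have hq2 : k / 2 = q := by omega
        rw [hq2, hq, show q + q = 2 * q by ring, zpow_mul, hsq]
    -- B must vanish by irrationality
    have hB : B = 0 := by
      by_contra hB0
      have : Real.sqrt p = (((z - A) / B : ℚ) : ℝ) := by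
        have hBne : ((B : ℝ)) ≠ 0 := by exact_mod_cast hB0
        push_cast
        field_simp
        rw [hz] at hsplit
        linarith [hsplit]
      exact (hp.irrational_sqrt) ⟨(z - A) / B, this.symm⟩
    -- now evaluate Q at p
    have heval : Q.eval (p : ℚ) = (p : ℚ) ^ M * B := by
      rw [hQ, Polynomial.eval_finset_sum, hBdef, Finset.mul_sum]
      apply Finset.sum_congr rfl
      intro k hk
      rw [Polynomial.eval_mul, Polynomial.eval_C, Polynomial.eval_pow, Polynomial.eval_X]
      have h1 : ((e k : ℤ)) = (k - 1) / 2 + M := by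
        rw [he]; exact Int.toNat_of_nonneg (hSnonneg k hk)
      have h2 : (p : ℚ) ^ (e k) = (p : ℚ) ^ ((e k : ℤ)) := by rw [zpow_natCast]
      rw [h2, h1, zpow_add₀ hq0]
      ring
    rw [Polynomial.IsRoot, heval, hB, mul_zero]
  -- infinitely many roots
  have hQ0 : Q = 0 := by
    apply Polynomial.eq_zero_of_infinite_isRoot
    have h1 : {p : ℕ | p.Prime ∧ N < p}.Infinite := by
      have heq : {p : ℕ | p.Prime ∧ N < p} = {p | p.Prime} \ Set.Iic N := by
        ext x; simp [Set.mem_Iic, not_le, and_comm]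
      rw [heq]
      exact Nat.infinite_setOf_prime.diff (Set.finite_Iic N)
    have h2 : ((fun n : ℕ => (n : ℚ)) '' {p : ℕ | p.Prime ∧ N < p}).Infinite :=
      h1.image (Set.injOn_of_injective Nat.cast_injective)
    apply h2.mono
    rintro x ⟨p, ⟨hp, hNp⟩, rfl⟩
    exact hroot p hp hNp
  -- extract coefficients
  intro k hk
  by_contra hPk
  have hkS : k ∈ S := by
    rw [hS, Finset.mem_filter, Finsupp.mem_support_iff]
    exact ⟨hPk, hk⟩
  have hcoeff : Q.coeff (e k) = (P k : ℚ) := by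
    rw [hQ, Polynomial.finset_sum_coeff]
    rw [Finset.sum_eq_single k]
    · simp [Polynomial.coeff_C_mul, Polynomial.coeff_X_pow]
    · intro j hj hjk
      have hjS := hj
      rw [hS, Finset.mem_filter] at hjS
      obtain ⟨qj, hqj⟩ := hjS.2
      obtain ⟨qk, hqk⟩ := hk
      have h1 : ((e j : ℤ)) = (j - 1) / 2 + M := Int.toNat_of_nonneg (hSnonneg j hj)
      have h2 : ((e k : ℤ)) = (k - 1) / 2 + M := Int.toNat_of_nonneg (hSnonneg k hkS)
      have hne : e j ≠ e k := by
        intro heq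
        have h3 : ((e j : ℤ)) = ((e k : ℤ)) := by exact_mod_cast heq
        exact hjk (by omega)
      simp [Polynomial.coeff_C_mul, Polynomial.coeff_X_pow, hne, Ne.symm hne]
    · intro hkn
      exact absurd hkS hkn
  rw [hQ0] at hcoeff
  simp only [Polynomial.coeff_zero] at hcoeff
  exact hPk (by exact_mod_cast hcoeff.symm)
end

section
/- Let P be a Laurent polynomial with integer coefficients in the variable v such that all odd-degree coefficients of P vanish. If for all sufficiently large primes p the value P(√p) is an integer, then P is a genuine polynomial in v² (no negative powers occur). -/
/-- If `P ∈ ℤ[v,v⁻¹]` has all odd-degree coefficients zero and takes integer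
values at `√p` for all sufficiently large primes `p`, then `P` has no negative
powers, i.e. it is a genuine polynomial in `v²`. -/
theorem laurent_integer_values_at_sqrt_primes_polynomial
    (P : ℤ →₀ ℤ) (hodd : ∀ k : ℤ, Odd k → P k = 0)
    (h : ∃ N : ℕ, ∀ p : ℕ, Nat.Prime p → N < p →
      ∃ z : ℤ, lEval P (Real.sqrt p) = (z : ℝ)) :
    ∀ k : ℤ, k < 0 → P k = 0 := by
  intro k hk
  by_contra hPk
  have hkS : k ∈ P.support := Finsupp.mem_support_iff.2 hPk
  obtain ⟨N, hN⟩ := h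
  have hSne : P.support.Nonempty := ⟨k, hkS⟩
  set k0 := P.support.min' hSne with hk0def
  have hk0S : k0 ∈ P.support := P.support.min'_mem hSne
  have hk0le : k0 ≤ k := P.support.min'_le k hkS
  have hk0neg : k0 < 0 := lt_of_le_of_lt hk0le hk
  have hPk0 : P k0 ≠ 0 := Finsupp.mem_support_iff.1 hk0S
  have heven : ∀ j ∈ P.support, Even j := by
    intro j hj
    by_contra hodd'
    exact (Finsupp.mem_support_iff.1 hj) (hodd j (Int.not_even_iff_odd.1 hodd'))
  have hk0even : Even k0 := heven k0 hk0S
  obtain ⟨t0, ht0⟩ := hk0even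
  have ht0neg : t0 < 0 := by omega
  set M : ℕ := (-t0).toNat with hMdef
  have hM : (M : ℤ) = -t0 := Int.toNat_of_nonneg (by omega)
  have hM1 : 1 ≤ M := by omega
  -- choose a big prime
  obtain ⟨p, hple, hp⟩ := Nat.exists_infinite_primes (max N (P k0).natAbs + 1)
  have hpN : N < p := by omega
  have hpK : (P k0).natAbs < p := by omega
  obtain ⟨z, hz⟩ := hN p hp hpN
  have hppos : (0:ℝ) < (p:ℝ) := by exact_mod_cast hp.pos
  have hsq : (Real.sqrt p) ^ (2:ℤ) = (p:ℝ) := by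
    rw [zpow_two]
    exact Real.mul_self_sqrt (le_of_lt hppos)
  -- exponent function
  set e : ℤ → ℕ := fun j => ((j - k0) / 2).toNat with hedef
  set H : ℤ := ∑ j ∈ P.support, P j * (p:ℤ) ^ (e j) with hHdef
  have key : (p:ℝ) ^ M * lEval P (Real.sqrt p) = (H : ℝ) := by
    rw [lEval, Finset.mul_sum, hHdef]
    push_cast
    apply Finset.sum_congr rfl
    intro j hj
    obtain ⟨t, ht⟩ := heven j hj
    have hjk0 : k0 ≤ j := P.support.min'_le j hj
    have htt0 : t0 ≤ t := by omega
    have hje : (j - k0) / 2 = t - t0 := by omega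
    have hez : (e j : ℤ) = t - t0 := by
      rw [hedef]; simp only []; rw [hje]; exact Int.toNat_of_nonneg (by omega)
    have h1 : (Real.sqrt p) ^ j = (p:ℝ) ^ t := by
      have : j = 2 * t := by omega
      rw [this, zpow_mul, hsq]
    rw [h1]
    have h2 : (p:ℝ) ^ M * (p:ℝ) ^ t = (p:ℝ) ^ (e j) := by
      have : ((p:ℝ) ^ (e j : ℤ)) = (p:ℝ) ^ (e j) := zpow_natCast _ _
      rw [← this, ← zpow_natCast (p:ℝ) M, ← zpow_add₀ (ne_of_gt hppos)]
      congr 1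
      omega
    linear_combination ((P j : ℝ)) * h2
  -- H = p^M * z
  have hHz : H = (p:ℤ) ^ M * z := by
    have : (H : ℝ) = ((p:ℤ) ^ M * z : ℤ) := by
      rw [← key, hz]; push_cast; ring
    exact_mod_cast this
  have hpdvdH : (p:ℤ) ∣ H := hHz ▸ Dvd.dvd.mul_right (dvd_pow_self _ (by omega)) z
  -- H ≡ P k0 mod p
  have hHmod : (p:ℤ) ∣ (H - P k0) := by
    have hsplit : H = P k0 * (p:ℤ) ^ (e k0) + ∑ j ∈ P.support.erase k0, P j * (p:ℤ) ^ (e j) := by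
      rw [hHdef, ← Finset.add_sum_erase _ _ hk0S]
    have he0 : e k0 = 0 := by
      rw [hedef]; simp
    rw [hsplit, he0, pow_zero, mul_one, add_sub_cancel_left]
    apply Finset.dvd_sum
    intro j hj
    have hjS : j ∈ P.support := Finset.mem_of_mem_erase hj
    have hjne : j ≠ k0 := Finset.ne_of_mem_erase hj
    obtain ⟨t, ht⟩ := heven j hjS
    have hjk0 : k0 ≤ j := P.support.min'_le j hjS
    have hepos : 1 ≤ e j := by
      rw [hedef]; simp only []
      omega
    exact Dvd.dvd.mul_left (dvd_pow_self _ (by omega)) _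
  have hpdvd : (p:ℤ) ∣ P k0 := by
    have := dvd_sub hpdvdH hHmod
    simpa using this
  have hle : (p:ℤ) ≤ |P k0| := Int.le_of_dvd (abs_pos.2 hPk0) ((dvd_abs _ _).mpr hpdvd)
  rw [Int.abs_eq_natAbs] at hle
  omega
end

section
/- Let Λ be an m×m skew-symmetric integer matrix and B̃ an m×n integer matrix such that Λ·(−B̃) = [D; 0] for an n×n diagonal matrix D with strictly positive diagonal entries. Let B denote the principal part of B̃, i.e., its upper n×n submatrix. Then the matrix D·B is skew-symmetric. -/
open Matrix

/-- If `(Λ, B̃)` is a compatible pair with diagonal matrix `D`, and `B` is the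
principal (upper `n×n`) part of `B̃`, then `D·B` is skew-symmetric. -/
theorem compatible_pair_DB_skew {m n : ℕ} (hmn : n ≤ m)
    (Λ : Matrix (Fin m) (Fin m) ℤ) (hskew : Λᵀ = -Λ)
    (B : Matrix (Fin m) (Fin n) ℤ)
    (d : Fin n → ℤ) (hd : ∀ j, 0 < d j)
    (hcompat : ∀ (i : Fin m) (j : Fin n),
      (Λ * (-B)) i j = if (i : ℕ) = (j : ℕ) then d j else 0) :
    (Matrix.diagonal d * B.submatrix (Fin.castLE hmn) id)ᵀ =
      -(Matrix.diagonal d * B.submatrix (Fin.castLE hmn) id) := by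
  have hBA : ∀ (i : Fin m) (j : Fin n),
      (Λ * B) i j = -(if (i : ℕ) = (j : ℕ) then d j else 0) := by
    intro i j
    have h := hcompat i j
    rw [Matrix.mul_neg, Matrix.neg_apply] at h
    linarith
  have key : ∀ (k j : Fin n),
      (Bᵀ * (Λ * B)) k j = -(d j * B (Fin.castLE hmn j) k) := by
    intro k j
    rw [Matrix.mul_apply]
    have hterm : ∀ i : Fin m, Bᵀ k i * (Λ * B) i j
        = if i = Fin.castLE hmn j then -(d j * B (Fin.castLE hmn j) k) else 0 := by
      intro i
      rw [hBA, Matrix.transpose_apply]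
      split_ifs with h1 h2 h2
      · subst h2; ring
      · exact absurd (Fin.ext h1) h2
      · exact absurd (congrArg Fin.val h2) h1
      · ring
    rw [Finset.sum_congr rfl (fun i _ => hterm i)]
    simp
  have hskew2 : (Bᵀ * (Λ * B))ᵀ = -(Bᵀ * (Λ * B)) := by
    rw [← Matrix.mul_assoc]
    simp [Matrix.transpose_mul, hskew, Matrix.mul_assoc, Matrix.neg_mul,
      Matrix.mul_neg]
  ext i j
  have h1 := key i j
  have h2 := key j i
  have h3 : (Bᵀ * (Λ * B)) j i = -(Bᵀ * (Λ * B)) i j := by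
    have := congrFun (congrFun hskew2 i) j
    simpa using this
  simp only [Matrix.transpose_apply, Matrix.neg_apply, Matrix.diagonal_mul,
    Matrix.submatrix_apply, id]
  linarith
end

section
/- Let B̃ be an m×n integer matrix with no entry b_{kk} on the principal diagonal of its principal part being nonzero at position k, and let 1 ≤ k ≤ n. With E_ε and F_ε the mutation matrices associated to B̃, k, and a sign ε, the product E_{+1}·B̃·F_{+1} equals E_{−1}·B̃·F_{−1}, and its (i,j) entry for (i,j) with i ≠ k and j ≠ k equals b_{ij} + (|b_{ik}|·b_{kj} + b_{ik}·|b_{kj}|)/2, while its entries in row k and column k are the negatives of those of B̃. -/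
open Matrix

private lemma mut_key1 (a c : ℤ) :
    max 0 (-a) * c + a * max 0 c = max 0 a * c + a * max 0 (-c) := by
  rcases le_total a 0 with ha | ha <;> rcases le_total c 0 with hc | hc <;>
    simp [max_eq_left, max_eq_right, ha, hc, neg_nonneg.mpr, neg_nonpos.mpr] <;> ring

private lemma mut_key2 (a c : ℤ) :
    2 * (max 0 (-a) * c + a * max 0 c) = |a| * c + a * |c| := by
  rcases le_total a 0 with ha | ha <;> rcases le_total c 0 with hc | hc <;>
    simp [max_eq_left, max_eq_right, ha, hc, neg_nonneg.mpr, neg_nonpos.mpr,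
      abs_of_nonneg, abs_of_nonpos] <;> ring

private lemma mut_EB {m n : ℕ} (B : Matrix (Fin m) (Fin n) ℤ) (k' : Fin m)
    (E : Matrix (Fin m) (Fin m) ℤ)
    (h1 : ∀ i j, j ≠ k' → E i j = if i = j then 1 else 0)
    (h2 : E k' k' = -1) (i : Fin m) (j : Fin n) :
    (E * B) i j = if i = k' then -B k' j else B i j + E i k' * B k' j := by
  rw [mul_apply]
  by_cases hi : i = k'
  · rw [if_pos hi, Finset.sum_eq_single k']
    · rw [hi, h2]; ring
    · intro b _ hb
      rw [hi, h1 _ _ hb, if_neg (Ne.symm hb), zero_mul]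
    · simp
  · rw [if_neg hi]
    have key : ∀ l, E i l * B l j =
        (if l = i then B i j else 0) + (if l = k' then E i k' * B k' j else 0) := by
      intro l
      by_cases hl : l = k'
      · subst hl
        rw [if_neg (Ne.symm hi), if_pos rfl, zero_add]
      · rw [h1 _ _ hl, if_neg hl, add_zero]
        by_cases hli : l = i
        · subst hli; simp
        · simp [Ne.symm hli, hli]
    rw [Finset.sum_congr rfl (fun l _ => key l), Finset.sum_add_distrib,
      Finset.sum_ite_eq', Finset.sum_ite_eq']
    simp

private lemma mut_BF {m n : ℕ} (M : Matrix (Fin m) (Fin n) ℤ) (k : Fin n)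
    (F : Matrix (Fin n) (Fin n) ℤ)
    (h1 : ∀ i j, i ≠ k → F i j = if i = j then 1 else 0)
    (h2 : F k k = -1) (i : Fin m) (j : Fin n) :
    (M * F) i j = if j = k then -M i k else M i j + M i k * F k j := by
  rw [mul_apply]
  by_cases hj : j = k
  · rw [if_pos hj, Finset.sum_eq_single j]
    · rw [hj, h2]; ring
    · intro b _ hb
      rw [hj] at hb ⊢
      rw [h1 _ _ hb, if_neg hb, mul_zero]
    · simp
  · rw [if_neg hj]
    have key : ∀ l, M i l * F l j =
        (if l = j then M i j else 0) + (if l = k then M i k * F k j else 0) := by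
      intro l
      by_cases hl : l = k
      · subst hl
        rw [if_neg (Ne.symm hj), if_pos rfl, zero_add]
      · rw [h1 _ _ hl, if_neg hl, add_zero]
        by_cases hlj : l = j
        · subst hlj; simp
        · simp [hlj]
    rw [Finset.sum_congr rfl (fun l _ => key l), Finset.sum_add_distrib,
      Finset.sum_ite_eq', Finset.sum_ite_eq']
    simp

private lemma mut_EBF {m n : ℕ} {hmn : n ≤ m} (B : Matrix (Fin m) (Fin n) ℤ) (k : Fin n)
    (hdiag : B (Fin.castLE hmn k) k = 0)
    (E : Matrix (Fin m) (Fin m) ℤ) (F : Matrix (Fin n) (Fin n) ℤ)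
    (hE1 : ∀ i j, j ≠ Fin.castLE hmn k → E i j = if i = j then 1 else 0)
    (hE2 : E (Fin.castLE hmn k) (Fin.castLE hmn k) = -1)
    (hF1 : ∀ i j, i ≠ k → F i j = if i = j then 1 else 0)
    (hF2 : F k k = -1) (i : Fin m) (j : Fin n) :
    (E * B * F) i j =
      if j = k then -B i k
      else if i = Fin.castLE hmn k then -B (Fin.castLE hmn k) j
      else B i j + E i (Fin.castLE hmn k) * B (Fin.castLE hmn k) j + B i k * F k j := by
  rw [mut_BF (E * B) k F hF1 hF2, mut_EB B _ E hE1 hE2, mut_EB B _ E hE1 hE2]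
  by_cases hj : j = k <;> by_cases hi : i = Fin.castLE hmn k <;>
    simp [hj, hi, hdiag] <;> ring

/-- Matrix mutation is independent of the choice of sign and agrees with
Fomin–Zelevinsky mutation: `E₊ B̃ F₊ = E₋ B̃ F₋`, whose `(i,j)` entry away from
row and column `k` is `b_{ij} + (|b_{ik}| b_{kj} + b_{ik} |b_{kj}|)/2` (stated
here multiplied by `2`), and whose entries in row `k` and column `k` are the
negatives of those of `B̃`. -/
theorem matrix_mutation_sign_independent {m n : ℕ} (hmn : n ≤ m)
    (B : Matrix (Fin m) (Fin n) ℤ) (k : Fin n)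
    (hdiag : B (Fin.castLE hmn k) k = 0)
    (Ep Em : Matrix (Fin m) (Fin m) ℤ) (Fp Fm : Matrix (Fin n) (Fin n) ℤ)
    (hEp1 : ∀ i j, j ≠ Fin.castLE hmn k → Ep i j = if i = j then 1 else 0)
    (hEp2 : Ep (Fin.castLE hmn k) (Fin.castLE hmn k) = -1)
    (hEp3 : ∀ i, i ≠ Fin.castLE hmn k → Ep i (Fin.castLE hmn k) = max 0 (-(1 : ℤ) * B i k))
    (hEm1 : ∀ i j, j ≠ Fin.castLE hmn k → Em i j = if i = j then 1 else 0)
    (hEm2 : Em (Fin.castLE hmn k) (Fin.castLE hmn k) = -1)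
    (hEm3 : ∀ i, i ≠ Fin.castLE hmn k → Em i (Fin.castLE hmn k) = max 0 (-(-1 : ℤ) * B i k))
    (hFp1 : ∀ i j, i ≠ k → Fp i j = if i = j then 1 else 0)
    (hFp2 : Fp k k = -1)
    (hFp3 : ∀ j, j ≠ k → Fp k j = max 0 ((1 : ℤ) * B (Fin.castLE hmn k) j))
    (hFm1 : ∀ i j, i ≠ k → Fm i j = if i = j then 1 else 0)
    (hFm2 : Fm k k = -1)
    (hFm3 : ∀ j, j ≠ k → Fm k j = max 0 ((-1 : ℤ) * B (Fin.castLE hmn k) j)) :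
    Ep * B * Fp = Em * B * Fm ∧
    (∀ (i : Fin m) (j : Fin n), i ≠ Fin.castLE hmn k → j ≠ k →
      2 * (Ep * B * Fp) i j =
        2 * B i j + (|B i k| * B (Fin.castLE hmn k) j + B i k * |B (Fin.castLE hmn k) j|)) ∧
    (∀ j : Fin n, (Ep * B * Fp) (Fin.castLE hmn k) j = -B (Fin.castLE hmn k) j) ∧
    (∀ i : Fin m, (Ep * B * Fp) i k = -B i k) := by
  have hp := mut_EBF (hmn := hmn) B k hdiag Ep Fp hEp1 hEp2 hFp1 hFp2
  have hm := mut_EBF (hmn := hmn) B k hdiag Em Fm hEm1 hEm2 hFm1 hFm2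
  refine ⟨?_, ?_, ?_, ?_⟩
  · ext i j
    rw [hp, hm]
    by_cases hj : j = k
    · simp [hj]
    · rw [if_neg hj, if_neg hj]
      by_cases hi : i = Fin.castLE hmn k
      · rw [if_pos hi, if_pos hi]
      · rw [if_neg hi, if_neg hi, hEp3 i hi, hEm3 i hi, hFp3 j hj, hFm3 j hj]
        have h := mut_key1 (B i k) (B (Fin.castLE hmn k) j)
        simp only [neg_one_mul, one_mul, neg_neg] at *
        linarith
  · intro i j hi hj
    rw [hp, if_neg hj, if_neg hi, hEp3 i hi, hFp3 j hj]
    have h := mut_key2 (B i k) (B (Fin.castLE hmn k) j)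
    simp only [neg_one_mul, one_mul] at *
    linarith
  · intro j
    rw [hp]
    by_cases hj : j = k
    · rw [if_pos hj, hj, hdiag, neg_zero]
    · rw [if_neg hj, if_pos rfl]
  · intro i
    rw [hp, if_pos rfl]
end

section
/- Let (Λ, B̃) be a compatible pair, i.e., Λ is an m×m skew-symmetric integer matrix, B̃ an m×n integer matrix, and Λ·(−B̃) = [D; 0] with D an n×n diagonal matrix with strictly positive diagonal entries. Fix 1 ≤ k ≤ n and a sign ε, and let E_ε and F_ε be the associated mutation matrices. Then (E_εᵀ Λ E_ε)·(−E_ε B̃ F_ε) = [D; 0]; that is, the mutated pair (E_εᵀ Λ E_ε, E_ε B̃ F_ε) is again compatible with the same matrix D. -/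
open Matrix

/-- Mutation preserves compatibility of compatible pairs: if `Λ·(−B̃) = [D; 0]`
with `D` diagonal with strictly positive entries, then for the mutation
matrices `E = E_ε`, `F = F_ε` one has `(Eᵀ Λ E)·(−(E B̃ F)) = [D; 0]`. -/
theorem mutation_preserves_compatibility {m n : ℕ} (hmn : n ≤ m)
    (Λ : Matrix (Fin m) (Fin m) ℤ) (hskew : Λᵀ = -Λ)
    (B : Matrix (Fin m) (Fin n) ℤ)
    (d : Fin n → ℤ) (hd : ∀ j, 0 < d j)
    (hcompat : ∀ (i : Fin m) (j : Fin n),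
      (Λ * (-B)) i j = if (i : ℕ) = (j : ℕ) then d j else 0)
    (k : Fin n) (ε : ℤ) (hε : ε = 1 ∨ ε = -1)
    (E : Matrix (Fin m) (Fin m) ℤ) (F : Matrix (Fin n) (Fin n) ℤ)
    (hE1 : ∀ i j, j ≠ Fin.castLE hmn k → E i j = if i = j then 1 else 0)
    (hE2 : E (Fin.castLE hmn k) (Fin.castLE hmn k) = -1)
    (hE3 : ∀ i, i ≠ Fin.castLE hmn k → E i (Fin.castLE hmn k) = max 0 (-ε * B i k))
    (hF1 : ∀ i j, i ≠ k → F i j = if i = j then 1 else 0)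
    (hF2 : F k k = -1)
    (hF3 : ∀ j, j ≠ k → F k j = max 0 (ε * B (Fin.castLE hmn k) j)) :
    ∀ (i : Fin m) (j : Fin n),
      ((Eᵀ * Λ * E) * (-(E * B * F))) i j = if (i : ℕ) = (j : ℕ) then d j else 0 := by
  intro i j
  -- C := Λ * (-B)
  have hC : ∀ (p : Fin m) (q : Fin n),
      (Λ * (-B)) p q = if p = Fin.castLE hmn q then d q else 0 := by
    intro p q
    rw [hcompat p q]
    by_cases h : p = Fin.castLE hmn q
    · rw [if_pos h, if_pos (by rw [h]; rfl)]
    · rw [if_neg h, if_neg (fun hc => h (Fin.ext (by simpa using hc)))]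
  -- E is an involution
  have hEE : E * E = 1 := by
    ext a b
    rw [Matrix.mul_apply]
    by_cases hb : b = Fin.castLE hmn k
    · subst hb
      by_cases ha : a = Fin.castLE hmn k
      · subst ha
        rw [Finset.sum_eq_single (Fin.castLE hmn k)]
        · rw [hE2]; norm_num [Matrix.one_apply]
        · intro l _ hl
          rw [hE1 (Fin.castLE hmn k) l hl, if_neg (fun h => hl h.symm), zero_mul]
        · exact fun h => absurd (Finset.mem_univ _) h
      · have hs : ∑ l, E a l * E l (Fin.castLE hmn k)
            = ∑ l ∈ ({a, Fin.castLE hmn k} : Finset (Fin m)),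
                E a l * E l (Fin.castLE hmn k) := by
          refine (Finset.sum_subset (Finset.subset_univ _) ?_).symm
          intro l _ hl
          simp only [Finset.mem_insert, Finset.mem_singleton, not_or] at hl
          rw [hE1 a l hl.2, if_neg (fun h => hl.1 h.symm), zero_mul]
        rw [hs, Finset.sum_pair ha, hE1 a a ha, if_pos rfl, hE2]
        simp [Matrix.one_apply, ha]
    · have h1 : ∀ l, E l b = if l = b then 1 else 0 := fun l => hE1 l b hb
      simp only [h1, mul_ite, mul_one, mul_zero, Finset.sum_ite_eq', Finset.mem_univ,
        if_true]
      rw [Matrix.one_apply]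
  -- reduce to Eᵀ * (Λ * (-B)) * F
  have hmain : Eᵀ * Λ * E * (-(E * B * F)) = Eᵀ * (Λ * (-B)) * F := by
    have h2 : E * (-B) * F = -(E * B * F) := by
      rw [Matrix.mul_neg, Matrix.neg_mul]
    rw [← h2]
    simp only [Matrix.mul_assoc]
    rw [← Matrix.mul_assoc E E, hEE, Matrix.one_mul]
  -- the skew-symmetry relation:  B k' l * d k = -(d l * B l' k)
  have hCT : (Λ * (-B))ᵀ = Bᵀ * Λ := by
    rw [Matrix.transpose_mul, Matrix.transpose_neg, hskew, Matrix.neg_mul,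
      Matrix.mul_neg, neg_neg]
  have hBC : Bᵀ * (Λ * (-B)) = -((Λ * (-B))ᵀ * B) := by
    rw [hCT, Matrix.mul_assoc, Matrix.mul_neg Λ B, Matrix.mul_neg]
  have hrel : ∀ l : Fin n,
      B (Fin.castLE hmn k) l * d k = -(d l * B (Fin.castLE hmn l) k) := by
    intro l
    have h1 : (Bᵀ * (Λ * (-B))) l k = B (Fin.castLE hmn k) l * d k := by
      rw [Matrix.mul_apply, Finset.sum_eq_single (Fin.castLE hmn k)]
      · rw [Matrix.transpose_apply, hC, if_pos rfl]
      · intro p _ hp; rw [hC, if_neg hp, mul_zero]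
      · exact fun h => absurd (Finset.mem_univ _) h
    have h2 : (-((Λ * (-B))ᵀ * B)) l k = -(d l * B (Fin.castLE hmn l) k) := by
      rw [Matrix.neg_apply, Matrix.mul_apply, Finset.sum_eq_single (Fin.castLE hmn l)]
      · rw [Matrix.transpose_apply, hC, if_pos rfl]
      · intro p _ hp; rw [Matrix.transpose_apply, hC, if_neg hp, zero_mul]
      · exact fun h => absurd (Finset.mem_univ _) h
    rw [← h1, ← h2, hBC]
  -- entries of Eᵀ * (Λ * (-B))
  have hEC : ∀ (a : Fin m) (q : Fin n),
      (Eᵀ * (Λ * (-B))) a q = E (Fin.castLE hmn q) a * d q := by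
    intro a q
    rw [Matrix.mul_apply, Finset.sum_eq_single (Fin.castLE hmn q)]
    · rw [Matrix.transpose_apply, hC, if_pos rfl]
    · intro p _ hp; rw [hC, if_neg hp, mul_zero]
    · exact fun h => absurd (Finset.mem_univ _) h
  rw [hmain, Matrix.mul_apply]
  simp only [hEC]
  by_cases hj : j = k
  · subst hj
    rw [Finset.sum_eq_single j]
    · rw [hF2]
      by_cases hi : i = Fin.castLE hmn j
      · subst hi
        rw [hE2, if_pos (show ((Fin.castLE hmn j : Fin m) : ℕ) = (j : ℕ) from rfl)]; ring
      · rw [hE1 (Fin.castLE hmn j) i hi, if_neg (fun h => hi h.symm),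
          if_neg (fun hc => hi (Fin.ext (by simpa using hc)))]
        ring
    · intro q _ hq
      rw [hF1 q j hq, if_neg hq, mul_zero]
    · exact fun h => absurd (Finset.mem_univ _) h
  · have hsum : ∑ q, E (Fin.castLE hmn q) i * d q * F q j
        = ∑ q ∈ ({j, k} : Finset (Fin n)), E (Fin.castLE hmn q) i * d q * F q j := by
      refine (Finset.sum_subset (Finset.subset_univ _) ?_).symm
      intro q _ hq
      simp only [Finset.mem_insert, Finset.mem_singleton, not_or] at hq
      rw [hF1 q j hq.2, if_neg hq.1, mul_zero]
    rw [hsum, Finset.sum_pair hj, hF1 j j hj, if_pos rfl, mul_one, hF3 j hj]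
    by_cases hi : i = Fin.castLE hmn k
    · subst hi
      have hjk : Fin.castLE hmn j ≠ Fin.castLE hmn k := by
        intro h
        exact hj (Fin.ext (by simpa using congrArg Fin.val h))
      rw [hE3 (Fin.castLE hmn j) hjk, hE2,
        if_neg (fun hc => hj (Fin.ext (by simpa using hc.symm)))]
      have e1 : max 0 (-ε * B (Fin.castLE hmn j) k) * d j
          = max 0 (-ε * B (Fin.castLE hmn j) k * d j) := by
        rw [max_mul_of_nonneg _ _ (hd j).le, zero_mul]
      have e2 : -ε * B (Fin.castLE hmn j) k * d j
          = ε * B (Fin.castLE hmn k) j * d k := by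
        linear_combination (-ε) * hrel j
      have e3 : max 0 (ε * B (Fin.castLE hmn k) j * d k)
          = max 0 (ε * B (Fin.castLE hmn k) j) * d k := by
        rw [max_mul_of_nonneg _ _ (hd k).le, zero_mul]
      rw [e1, e2, e3]; ring
    · rw [hE1 (Fin.castLE hmn j) i hi, hE1 (Fin.castLE hmn k) i hi,
        if_neg (show ¬ Fin.castLE hmn k = i from fun h => hi h.symm), zero_mul,
        zero_mul, add_zero]
      by_cases h : Fin.castLE hmn j = i
      · rw [if_pos h, if_pos (by rw [← h]; rfl), one_mul]
      · rw [if_neg h, if_neg (fun hc => h (Fin.ext (by simpa using hc.symm))), zero_mul]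
end

section
/- Let R be an integral domain, and let 𝒯 be the quantum torus over (R, v) associated to ℤᵐ with skew-symmetric form λ, with B̃ an m×n integer matrix of full rank defining the partial order on ℤᵐ (h ≤ g iff g = h + B̃e with e ∈ ℕⁿ). If U = Σ_g P_g Xᵍ and U′ = Σ_g P′_g Xᵍ are nonzero elements of 𝒯 each having a unique minimal element in their support with respect to this order, denoted deg U and deg U′, then U·U′ has the unique minimal degree deg U + deg U′. -/
open Matrix

/-- The partial order on `ℤᵐ` attached to `B̃`: `h ≤ g` iff `g = h + B̃e` for
some `e ∈ ℕⁿ`. -/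
def degLe {m n : ℕ} (B : Matrix (Fin m) (Fin n) ℤ) (h g : Fin m → ℤ) : Prop :=
  ∃ e : Fin n → ℤ, (∀ i, 0 ≤ e i) ∧ g = h + B.mulVec e

/-- `d` is the unique minimal element of the set `S` with respect to the
partial order attached to `B̃`. -/
def uniqueMinDeg {m n : ℕ} (B : Matrix (Fin m) (Fin n) ℤ)
    (S : (Fin m → ℤ) → Prop) (d : Fin m → ℤ) : Prop :=
  S d ∧ (∀ g, S g → degLe B g d → g = d) ∧
    ∀ g, S g → (∀ h, S h → degLe B h g → h = g) → g = d

/-- The coefficient of `X^g` in the product `U·U'` of two elements of the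
quantum torus over `(R, v)` (elements being given by their finitely supported
coefficient functions, multiplication twisted by `v^{λ(a,b)}`). -/
noncomputable def mulCoef {R : Type*} [CommRing R] (v : Rˣ) {m : ℕ}
    (lam : (Fin m → ℤ) → (Fin m → ℤ) → ℤ)
    (U U' : (Fin m → ℤ) →₀ R) (g : Fin m → ℤ) : R :=
  ∑ a ∈ U.support, ∑ b ∈ U'.support,
    if a + b = g then ((v ^ lam a b : Rˣ) : R) * U a * U' b else 0

lemma degLe_refl {m n : ℕ} (B : Matrix (Fin m) (Fin n) ℤ) (g : Fin m → ℤ) :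
    degLe B g g :=
  ⟨0, fun _ => le_refl 0, by simp⟩

lemma degLe_trans {m n : ℕ} {B : Matrix (Fin m) (Fin n) ℤ} {a b c : Fin m → ℤ}
    (h1 : degLe B a b) (h2 : degLe B b c) : degLe B a c := by
  obtain ⟨e, he, rfl⟩ := h1
  obtain ⟨e', he', rfl⟩ := h2
  exact ⟨e + e', fun i => add_nonneg (he i) (he' i), by
    rw [Matrix.mulVec_add]; abel⟩

lemma degLe_antisymm {m n : ℕ} {B : Matrix (Fin m) (Fin n) ℤ}
    (hinj : Function.Injective B.mulVec) {a b : Fin m → ℤ}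
    (h1 : degLe B a b) (h2 : degLe B b a) : a = b := by
  obtain ⟨e, he, hb⟩ := h1
  obtain ⟨e', he', ha⟩ := h2
  have h0 : B.mulVec (e + e') = B.mulVec 0 := by
    rw [Matrix.mulVec_add, Matrix.mulVec_zero]
    funext i
    have := congrFun ha i
    rw [hb] at this
    simp only [Pi.add_apply, Pi.zero_apply] at this ⊢
    omega
  have hee : e + e' = 0 := hinj h0
  have he0 : e = 0 := by
    funext i
    have := congrFun hee i
    have h1 := he i; have h2 := he' i
    simp only [Pi.add_apply, Pi.zero_apply] at this ⊢
    omega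
  rw [hb, he0, Matrix.mulVec_zero, add_zero]

lemma degLe_add {m n : ℕ} {B : Matrix (Fin m) (Fin n) ℤ} {a b a' b' : Fin m → ℤ}
    (h1 : degLe B a b) (h2 : degLe B a' b') : degLe B (a + a') (b + b') := by
  obtain ⟨e, he, rfl⟩ := h1
  obtain ⟨e', he', rfl⟩ := h2
  exact ⟨e + e', fun i => add_nonneg (he i) (he' i), by
    rw [Matrix.mulVec_add]; abel⟩

/-- In a finite set, below every element there is a minimal element. -/
lemma exists_minimal_degLe {m n : ℕ} {B : Matrix (Fin m) (Fin n) ℤ}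
    (hinj : Function.Injective B.mulVec) (s : Finset (Fin m → ℤ)) :
    ∀ g ∈ s, ∃ d ∈ s, degLe B d g ∧ ∀ h ∈ s, degLe B h d → h = d := by
  induction s using Finset.strongInduction with
  | _ s ih =>
    intro g hg
    by_cases hmin : ∀ h ∈ s, degLe B h g → h = g
    · exact ⟨g, hg, degLe_refl B g, hmin⟩
    · push_neg at hmin
      obtain ⟨h, hs, hle, hne⟩ := hmin
      have hsub : s.erase g ⊂ s := Finset.erase_ssubset hg
      obtain ⟨d, hd, hdh, hdm⟩ := ih _ hsub h (Finset.mem_erase.mpr ⟨hne, hs⟩)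
      refine ⟨d, Finset.mem_of_mem_erase hd, degLe_trans hdh hle, ?_⟩
      intro h' hh' hle'
      by_cases hgh' : h' = g
      · subst hgh'
        exact absurd (degLe_antisymm hinj hle' (degLe_trans hdh hle)).symm
          (Finset.ne_of_mem_erase hd)
      · exact hdm h' (Finset.mem_erase.mpr ⟨hgh', hh'⟩) hle'

/-- A unique minimal degree is in fact a least element of the support. -/
lemma uniqueMinDeg_least {R : Type*} [CommRing R] {m n : ℕ}
    {B : Matrix (Fin m) (Fin n) ℤ} (hinj : Function.Injective B.mulVec)
    {U : (Fin m → ℤ) →₀ R} {dU : Fin m → ℤ}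
    (hU : uniqueMinDeg B (fun g => U g ≠ 0) dU) :
    ∀ g, U g ≠ 0 → degLe B dU g := by
  intro g hg
  obtain ⟨d, hd, hdg, hdm⟩ := exists_minimal_degLe hinj U.support g
    (Finsupp.mem_support_iff.mpr hg)
  have hdU : d = dU := by
    refine hU.2.2 d (Finsupp.mem_support_iff.mp hd) ?_
    intro h hh hle
    exact hdm h (Finsupp.mem_support_iff.mpr hh) hle
  rw [← hdU]
  exact hdg

/-- If `U` and `U'` each have a unique minimal degree, then so does `U·U'`,
namely the sum of the minimal degrees. -/
theorem mul_unique_min_degree {R : Type*} [CommRing R] [IsDomain R] (v : Rˣ)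
    {m n : ℕ} (lam : (Fin m → ℤ) → (Fin m → ℤ) → ℤ)
    (hlam : ∀ g h, lam h g = -lam g h)
    (B : Matrix (Fin m) (Fin n) ℤ) (hinj : Function.Injective B.mulVec)
    (U U' : (Fin m → ℤ) →₀ R) (dU dU' : Fin m → ℤ)
    (hU : uniqueMinDeg B (fun g => U g ≠ 0) dU)
    (hU' : uniqueMinDeg B (fun g => U' g ≠ 0) dU') :
    uniqueMinDeg B (fun g => mulCoef v lam U U' g ≠ 0) (dU + dU') := by
  have hleast := uniqueMinDeg_least hinj hU
  have hleast' := uniqueMinDeg_least hinj hU'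
  -- any pair summing to dU + dU' must be (dU, dU')
  have key : ∀ a, U a ≠ 0 → ∀ b, U' b ≠ 0 → a + b = dU + dU' →
      a = dU ∧ b = dU' := by
    intro a ha b hb hab
    obtain ⟨e, he, hae⟩ := hleast a ha
    obtain ⟨e', he', hbe⟩ := hleast' b hb
    have h0 : B.mulVec (e + e') = B.mulVec 0 := by
      rw [Matrix.mulVec_add, Matrix.mulVec_zero]
      funext i
      have := congrFun hab i
      rw [hae, hbe] at this
      simp only [Pi.add_apply, Pi.zero_apply] at this ⊢
      omega
    have hee : e + e' = 0 := hinj h0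
    have he0 : e = 0 := by
      funext i
      have := congrFun hee i
      have h1 := he i; have h2 := he' i
      simp only [Pi.add_apply, Pi.zero_apply] at this ⊢
      omega
    have he0' : e' = 0 := by
      rw [he0, zero_add] at hee; exact hee
    constructor
    · rw [hae, he0, Matrix.mulVec_zero, add_zero]
    · rw [hbe, he0', Matrix.mulVec_zero, add_zero]
  -- the coefficient at dU + dU'
  have hcoef : mulCoef v lam U U' (dU + dU') =
      ((v ^ lam dU dU' : Rˣ) : R) * U dU * U' dU' := by
    rw [mulCoef]
    rw [Finset.sum_eq_single dU]
    · rw [Finset.sum_eq_single dU']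
      · simp
      · intro b hb hbne
        rw [if_neg]
        intro hab
        exact hbne (key dU hU.1 b (Finsupp.mem_support_iff.mp hb) hab).2
      · intro hdU'
        exact absurd (Finsupp.mem_support_iff.mpr hU'.1) hdU'
    · intro a ha hane
      refine Finset.sum_eq_zero fun b hb => ?_
      rw [if_neg]
      intro hab
      exact hane (key a (Finsupp.mem_support_iff.mp ha) b
        (Finsupp.mem_support_iff.mp hb) hab).1
    · intro hdU
      exact absurd (Finsupp.mem_support_iff.mpr hU.1) hdU
  have hne : mulCoef v lam U U' (dU + dU') ≠ 0 := by
    rw [hcoef]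
    exact mul_ne_zero (mul_ne_zero (Units.ne_zero _) hU.1) hU'.1
  -- any element of the product support is ≥ dU + dU'
  have hsupp : ∀ g, mulCoef v lam U U' g ≠ 0 → degLe B (dU + dU') g := by
    intro g hg
    rw [mulCoef] at hg
    obtain ⟨a, ha, hsa⟩ := Finset.exists_ne_zero_of_sum_ne_zero hg
    obtain ⟨b, hb, hsb⟩ := Finset.exists_ne_zero_of_sum_ne_zero hsa
    have hab : a + b = g := by
      by_contra hcon
      rw [if_neg hcon] at hsb
      exact hsb rfl
    rw [← hab]
    exact degLe_add (hleast a (Finsupp.mem_support_iff.mp ha))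
      (hleast' b (Finsupp.mem_support_iff.mp hb))
  refine ⟨hne, ?_, ?_⟩
  · intro g hg hle
    exact degLe_antisymm hinj hle (hsupp g hg)
  · intro g hg hmin
    exact (hmin (dU + dU') hne (hsupp g hg)).symm
end
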